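/- arXiv:1304.1748 — 6 statements merged into one kernel-verified Lean document; each statement's English description precedes it below -/
import Mathlib

section
/- For every ω ∈ (-1,1) and every x ∈ ℝ, U_ω(x)² · exp( 2i ∫₀ˣ |U_ω(x')|² dx' ) = |U_ω(x)|², i.e. this product equals the real number (1−ω²)/(ω + cosh(2√(1−ω²) x)). -/
open Complex

/-!
Write `U_ω = k / D` with `k = √(1 - ω²)` and
`D(x) = √(1 + ω) cosh (k x) + i √(1 - ω) sinh (k x)`. Since `Re D > 0`, the phase
`arg D = arctan (Im D / Re D)` is smooth, and its derivative is `k² / |D|² = |U_ω|²`, because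
`Re D · (Im D)' - (Re D)' · Im D = k² (cosh² - sinh²) = k²`. With `arg D(0) = 0` this gives
`∫₀ˣ |U_ω|² = arg D(x)`, and then `(k / D)² e^{2i arg D} = k² / |D|²` by the polar form
of `D`. Finally `|D|² = ω + cosh (2 k x)`.
-/

/-- The MTM soliton profile `U_ω`. -/
noncomputable def solitonU (ω : ℝ) (x : ℝ) : ℂ :=
  (Real.sqrt (1 - ω ^ 2) : ℂ) /
    ((Real.sqrt (1 + ω) * Real.cosh (Real.sqrt (1 - ω ^ 2) * x) : ℝ) +
      Complex.I * (Real.sqrt (1 - ω) * Real.sinh (Real.sqrt (1 - ω ^ 2) * x) : ℝ))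

theorem div_sq_mul_exp_two_mul_arg (c : ℝ) (z : ℂ) :
    (c / z) ^ 2 * exp (2 * I * arg z) = ((‖c / z‖ ^ 2 : ℝ) : ℂ) := by
  rcases eq_or_ne z 0 with rfl | hz
  · simp
  have hpolar : z ^ 2 = (‖z‖ : ℂ) ^ 2 * exp (2 * I * arg z) := by
    conv_lhs => rw [← norm_mul_exp_arg_mul_I z]
    rw [mul_pow, ← exp_nat_mul]
    ring_nf
  have hz' : (‖z‖ : ℂ) ≠ 0 := by exact_mod_cast norm_ne_zero_iff.2 hz
  rw [div_pow, hpolar, norm_div, norm_real, Real.norm_eq_abs, div_pow, sq_abs]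
  push_cast
  field_simp [exp_ne_zero]

theorem Complex.arg_eq_arctan_im_div_re {z : ℂ} (hz : 0 < z.re) :
    arg z = Real.arctan (z.im / z.re) :=
  (Real.arctan_eq_of_tan_eq (tan_arg z) (abs_lt.1 (abs_arg_lt_pi_div_two_iff.2 (.inl hz)))).symm

theorem HasDerivAt.arctan_div {a b : ℝ → ℝ} {a' b' x : ℝ} (ha : HasDerivAt a a' x)
    (hb : HasDerivAt b b' x) (hx : a x ≠ 0) :
    HasDerivAt (fun y => Real.arctan (b y / a y))
      ((a x * b' - a' * b x) / (a x ^ 2 + b x ^ 2)) x := by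
  refine (hb.div ha hx).arctan.congr_deriv ?_
  rw [Pi.div_apply]
  field_simp

noncomputable def solitonDenom (ω x : ℝ) : ℂ :=
  ((Real.sqrt (1 + ω) * Real.cosh (Real.sqrt (1 - ω ^ 2) * x) : ℝ) +
    I * (Real.sqrt (1 - ω) * Real.sinh (Real.sqrt (1 - ω ^ 2) * x) : ℝ))

namespace solitonDenom

variable {ω : ℝ}

theorem re (x : ℝ) :
    (solitonDenom ω x).re = Real.sqrt (1 + ω) * Real.cosh (Real.sqrt (1 - ω ^ 2) * x) := by
  simp only [solitonDenom, add_re, ofReal_re, ofReal_im, I_mul_re]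
  ring

theorem im (x : ℝ) :
    (solitonDenom ω x).im = Real.sqrt (1 - ω) * Real.sinh (Real.sqrt (1 - ω ^ 2) * x) := by
  simp only [solitonDenom, add_im, ofReal_re, ofReal_im, I_mul_im]
  ring

theorem re_pos (hω : -1 < ω) (x : ℝ) : 0 < (solitonDenom ω x).re := by
  rw [re]
  exact mul_pos (Real.sqrt_pos.2 (by linarith)) (Real.cosh_pos _)

theorem normSq_eq (hω₁ : -1 ≤ ω) (hω₂ : ω ≤ 1) (x : ℝ) :
    normSq (solitonDenom ω x) = ω + Real.cosh (2 * Real.sqrt (1 - ω ^ 2) * x) := by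
  rw [normSq_apply, re, im, mul_assoc 2, Real.cosh_two_mul]
  set t := Real.sqrt (1 - ω ^ 2) * x
  have hp := Real.sq_sqrt (show 0 ≤ 1 + ω by linarith)
  have hm := Real.sq_sqrt (show 0 ≤ 1 - ω by linarith)
  linear_combination
    Real.cosh t ^ 2 * hp + Real.sinh t ^ 2 * hm + ω * Real.cosh_sq_sub_sinh_sq t

theorem arg_zero : arg (solitonDenom ω 0) = 0 := by
  simp [solitonDenom, arg_ofReal_of_nonneg]

end solitonDenom

theorem solitonU_eq_div (ω x : ℝ) :
    solitonU ω x = Real.sqrt (1 - ω ^ 2) / solitonDenom ω x :=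
  rfl

theorem norm_solitonU_sq_eq_div_normSq {ω : ℝ} (hω₁ : -1 ≤ ω) (hω₂ : ω ≤ 1) (x : ℝ) :
    ‖solitonU ω x‖ ^ 2 = (1 - ω ^ 2) / normSq (solitonDenom ω x) := by
  rw [← normSq_eq_norm_sq, solitonU_eq_div, normSq_div, normSq_ofReal, ← sq,
    Real.sq_sqrt (by nlinarith)]

theorem hasDerivAt_arg_solitonDenom {ω : ℝ} (hω₁ : -1 < ω) (hω₂ : ω < 1) (x : ℝ) :
    HasDerivAt (fun y => arg (solitonDenom ω y)) (‖solitonU ω x‖ ^ 2) x := by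
  set k := Real.sqrt (1 - ω ^ 2)
  have hphase : (fun y => arg (solitonDenom ω y)) =
      fun y => Real.arctan ((solitonDenom ω y).im / (solitonDenom ω y).re) := by
    funext y
    exact arg_eq_arctan_im_div_re (solitonDenom.re_pos hω₁ y)
  have hlin : HasDerivAt (fun y : ℝ => k * y) k x := by
    simpa using (hasDerivAt_id x).const_mul k
  have hre : HasDerivAt (fun y => (solitonDenom ω y).re)
      (Real.sqrt (1 + ω) * (Real.sinh (k * x) * k)) x := by
    simp only [solitonDenom.re]
    exact ((Real.hasDerivAt_cosh _).comp x hlin).const_mul _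
  have him : HasDerivAt (fun y => (solitonDenom ω y).im)
      (Real.sqrt (1 - ω) * (Real.cosh (k * x) * k)) x := by
    simp only [solitonDenom.im]
    exact ((Real.hasDerivAt_sinh _).comp x hlin).const_mul _
  have hk : Real.sqrt (1 + ω) * Real.sqrt (1 - ω) = k := by
    rw [← Real.sqrt_mul (by linarith), show (1 + ω) * (1 - ω) = 1 - ω ^ 2 by ring]
  rw [hphase]
  refine (hre.arctan_div him (solitonDenom.re_pos hω₁ x).ne').congr_deriv ?_
  have hk2 : k ^ 2 = 1 - ω ^ 2 := Real.sq_sqrt (by nlinarith)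
  rw [norm_solitonU_sq_eq_div_normSq hω₁.le hω₂.le, ← hk2, normSq_apply,
    solitonDenom.re, solitonDenom.im]
  congr 1
  · linear_combination k * (Real.cosh (k * x) ^ 2 - Real.sinh (k * x) ^ 2) * hk +
      k ^ 2 * Real.cosh_sq_sub_sinh_sq (k * x)
  · ring

theorem continuous_solitonU {ω : ℝ} (hω : -1 < ω) : Continuous (solitonU ω) := by
  have hD : Continuous (solitonDenom ω) := by
    unfold solitonDenom
    fun_prop
  rw [funext (solitonU_eq_div ω)]
  exact continuous_const.div hD fun y => ne_of_apply_ne re (solitonDenom.re_pos hω y).ne'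

theorem integral_norm_solitonU_sq {ω : ℝ} (hω₁ : -1 < ω) (hω₂ : ω < 1) (x : ℝ) :
    ∫ y in (0 : ℝ)..x, ‖solitonU ω y‖ ^ 2 = arg (solitonDenom ω x) := by
  rw [intervalIntegral.integral_eq_sub_of_hasDerivAt
    (fun y _ => hasDerivAt_arg_solitonDenom hω₁ hω₂ y)
    (((continuous_solitonU hω₁).norm.pow 2).intervalIntegrable 0 x), solitonDenom.arg_zero,
    sub_zero]

theorem stmt4 (ω : ℝ) (hω₁ : -1 < ω) (hω₂ : ω < 1) (x : ℝ) :
    (solitonU ω x) ^ 2 *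
        Complex.exp (2 * Complex.I *
          ((∫ x' in (0 : ℝ)..x, ‖solitonU ω x'‖ ^ 2 : ℝ) : ℂ))
      = (((1 - ω ^ 2) / (ω + Real.cosh (2 * Real.sqrt (1 - ω ^ 2) * x)) : ℝ) : ℂ) := by
  rw [integral_norm_solitonU_sq hω₁ hω₂, solitonU_eq_div, div_sq_mul_exp_two_mul_arg,
    ← solitonU_eq_div, norm_solitonU_sq_eq_div_normSq hω₁.le hω₂.le,
    solitonDenom.normSq_eq hω₁.le hω₂.le]
end

section
/- For every ω ∈ (-1,1), the squared L² norm of the MTM soliton profile equals arccos(ω): ∫_ℝ |U_ω(x)|² dx = arccos(ω). -/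
/-! Writing `k = √(1 - ω²)`, one has `|U_ω(x)|² = (1 - ω²) / (cosh (2kx) + ω)`, so after the
substitution `t = 2kx` the claim becomes `∫ k / (cosh t + ω) dt = 2 arccos ω`. For `t > 0` this
integrand is the derivative of `arccos ((1 + ω cosh t) / (cosh t + ω))`, which increases from
`arccos 1 = 0` to `arccos ω`; evenness of `cosh` accounts for the factor `2`. -/

open Complex MeasureTheory

open Filter Set Topology

namespace Real

theorem tendsto_cosh_atTop : Tendsto cosh atTop atTop :=
  tendsto_atTop_mono (fun x => by rw [cosh_eq]; linarith [exp_pos (-x)])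
    (tendsto_exp_atTop.atTop_div_const two_pos)

variable {ω : ℝ}

lemma cosh_add_pos (hω : -1 < ω) (t : ℝ) : 0 < cosh t + ω := by
  linarith [one_le_cosh t]

lemma hasDerivAt_arccos_one_add_mul_cosh_div (hω₁ : -1 < ω) (hω₂ : ω < 1) {t : ℝ}
    (ht : 0 < t) :
    HasDerivAt (fun t => arccos ((1 + ω * cosh t) / (cosh t + ω)))
      (√(1 - ω ^ 2) / (cosh t + ω)) t := by
  have hD := cosh_add_pos hω₁ t
  have hC : 1 < cosh t := one_lt_cosh.2 ht.ne'
  have hS : 0 < sinh t := sinh_pos_iff.2 ht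
  have hk : 0 < 1 - ω ^ 2 := by nlinarith
  have hs₁ : (1 + ω * cosh t) / (cosh t + ω) ≠ -1 := by
    rw [Ne, div_eq_iff hD.ne']; nlinarith
  have hs₂ : (1 + ω * cosh t) / (cosh t + ω) ≠ 1 := by
    rw [Ne, div_eq_iff hD.ne']; nlinarith
  have hsqrt : √(1 - ((1 + ω * cosh t) / (cosh t + ω)) ^ 2)
      = sinh t * √(1 - ω ^ 2) / (cosh t + ω) := by
    rw [← sqrt_sq (by positivity : 0 ≤ sinh t * √(1 - ω ^ 2) / (cosh t + ω))]
    congr 1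
    rw [div_pow (sinh t * _), mul_pow, sq_sqrt hk.le]
    field_simp
    linear_combination (1 - ω ^ 2) * cosh_sq t
  have hs' : HasDerivAt (fun t => (1 + ω * cosh t) / (cosh t + ω))
      ((ω * sinh t * (cosh t + ω) - (1 + ω * cosh t) * sinh t) / (cosh t + ω) ^ 2) t :=
    (((hasDerivAt_cosh t).const_mul ω).const_add 1).div
      ((hasDerivAt_cosh t).add_const ω) hD.ne'
  refine ((hasDerivAt_arccos hs₁ hs₂).comp t hs').congr_deriv ?_
  rw [hsqrt]
  field_simp
  linear_combination (-1 : ℝ) * sq_sqrt hk.le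

lemma tendsto_one_add_mul_cosh_div (hω : -1 < ω) :
    Tendsto (fun t => (1 + ω * cosh t) / (cosh t + ω)) atTop (𝓝 ω) := by
  have hdecay : Tendsto (fun t => (1 - ω ^ 2) / (cosh t + ω)) atTop (𝓝 0) :=
    (tendsto_cosh_atTop.atTop_add tendsto_const_nhds).const_div_atTop _
  rw [← add_zero ω]
  refine (hdecay.const_add ω).congr fun t => ?_
  rw [add_div' _ _ _ (cosh_add_pos hω t).ne']
  ring

lemma integral_Ioi_sqrt_div_cosh_add (hω₁ : -1 < ω) (hω₂ : ω < 1) :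
    ∫ t in Ioi 0, √(1 - ω ^ 2) / (cosh t + ω) = arccos ω := by
  have hF : Continuous fun t => arccos ((1 + ω * cosh t) / (cosh t + ω)) :=
    continuous_arccos.comp <| by
      fun_prop (disch := exact fun t => (cosh_add_pos hω₁ t).ne')
  rw [integral_Ioi_of_hasDerivAt_of_nonneg hF.continuousWithinAt
    (fun t ht => hasDerivAt_arccos_one_add_mul_cosh_div hω₁ hω₂ ht)
    (fun t _ => div_nonneg (sqrt_nonneg _) (cosh_add_pos hω₁ t).le)
    ((continuous_arccos.tendsto ω).comp (tendsto_one_add_mul_cosh_div hω₁))]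
  simp [div_self (by linarith : 1 + ω ≠ 0)]

lemma integral_sqrt_div_cosh_add (hω₁ : -1 < ω) (hω₂ : ω < 1) :
    ∫ t, √(1 - ω ^ 2) / (cosh t + ω) = 2 * arccos ω := by
  rw [← integral_Ioi_sqrt_div_cosh_add hω₁ hω₂, ← integral_comp_abs]
  simp only [cosh_abs]

end Real

lemma norm_solitonU_sq {ω : ℝ} (hω₁ : -1 ≤ ω) (hω₂ : ω ≤ 1) (x : ℝ) :
    ‖solitonU ω x‖ ^ 2 = (1 - ω ^ 2) / (Real.cosh (2 * √(1 - ω ^ 2) * x) + ω) := by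
  rw [solitonU, mul_comm I]
  set k := √(1 - ω ^ 2)
  have hk : k ^ 2 = 1 - ω ^ 2 := Real.sq_sqrt (by nlinarith)
  have hcosh : Real.cosh (2 * k * x) = Real.cosh (k * x) ^ 2 + Real.sinh (k * x) ^ 2 := by
    rw [mul_assoc, Real.cosh_two_mul]
  rw [norm_div, div_pow, Complex.sq_norm, Complex.sq_norm, Complex.normSq_ofReal,
    Complex.normSq_add_mul_I, mul_pow, mul_pow, Real.sq_sqrt (by linarith),
    Real.sq_sqrt (by linarith), hcosh, ← sq, hk]
  congr 1
  linear_combination ω * Real.cosh_sq (k * x)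

theorem stmt6 (ω : ℝ) (hω₁ : -1 < ω) (hω₂ : ω < 1) :
    (∫ x : ℝ, ‖solitonU ω x‖ ^ 2) = Real.arccos ω := by
  set k := √(1 - ω ^ 2)
  have hk : 0 < k := Real.sqrt_pos.2 (by nlinarith)
  calc (∫ x : ℝ, ‖solitonU ω x‖ ^ 2)
      = ∫ x, k * (k / (Real.cosh (2 * k * x) + ω)) := by
        congr 1; ext x
        rw [norm_solitonU_sq hω₁.le hω₂.le, ← mul_div_assoc, ← sq, Real.sq_sqrt (by nlinarith)]
    _ = k * (|(2 * k)⁻¹| * (2 * Real.arccos ω)) := by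
        rw [integral_const_mul, Measure.integral_comp_mul_left (fun t => k / (Real.cosh t + ω)),
          Real.integral_sqrt_div_cosh_add hω₁ hω₂, smul_eq_mul]
    _ = Real.arccos ω := by
        rw [abs_of_pos (by positivity)]
        field_simp
end

section
/- For every ω ∈ (-1,1), ∫_ℝ (1 + ω cosh(2z)) / (ω + cosh(2z))² dz = 1. -/
/-!
Since `cosh² - sinh² = 1`, the integrand `(1 + ω cosh u) / (ω + cosh u)²` is the derivative of
`sinh u / (ω + cosh u)`, which tends to `±1` at `±∞`; as the integrand is `O(exp (-|u|))`, the
integral over `ℝ` is `2`, and the substitution `u = 2z` halves it.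
-/

open MeasureTheory Real Filter Asymptotics Set Topology

section

variable {ω : ℝ}

lemma add_cosh_pos (hω : -1 < ω) (x : ℝ) : 0 < ω + cosh x := by
  linarith [one_le_cosh x]

lemma hasDerivAt_sinh_div_add_cosh (hω : -1 < ω) (x : ℝ) :
    HasDerivAt (fun x ↦ sinh x / (ω + cosh x)) ((1 + ω * cosh x) / (ω + cosh x) ^ 2) x := by
  refine ((hasDerivAt_sinh x).div ((hasDerivAt_cosh x).const_add ω)
    (add_cosh_pos hω x).ne').congr_deriv ?_
  rw [← cosh_sq_sub_sinh_sq x]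
  ring

lemma sinh_div_add_cosh_eq (x : ℝ) :
    sinh x / (ω + cosh x) = (1 - exp (-x) ^ 2) / (1 + 2 * ω * exp (-x) + exp (-x) ^ 2) := by
  have hx : exp x * exp (-x) = 1 := by rw [← exp_add, add_neg_cancel, exp_zero]
  rw [← mul_div_mul_left _ _ (mul_ne_zero two_ne_zero (exp_pos (-x)).ne'), sinh_eq, cosh_eq]
  congr 1 <;> linear_combination hx

lemma tendsto_sinh_div_add_cosh_atTop :
    Tendsto (fun x ↦ sinh x / (ω + cosh x)) atTop (𝓝 1) := by
  simp_rw [sinh_div_add_cosh_eq]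
  have h : ContinuousAt (fun t : ℝ ↦ (1 - t ^ 2) / (1 + 2 * ω * t + t ^ 2)) 0 := by
    fun_prop (disch := norm_num)
  simpa [Function.comp_def] using h.tendsto.comp tendsto_exp_neg_atTop_nhds_zero

lemma tendsto_sinh_div_add_cosh_atBot :
    Tendsto (fun x ↦ sinh x / (ω + cosh x)) atBot (𝓝 (-1)) := by
  have h := (tendsto_sinh_div_add_cosh_atTop (ω := ω)).neg.comp tendsto_neg_atBot_atTop
  refine h.congr fun x ↦ ?_
  simp [neg_div]

lemma abs_one_add_mul_div_add_sq_le (hω : |ω| < 1) {c : ℝ} (hc : 1 ≤ c) :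
    |(1 + ω * c) / (ω + c) ^ 2| ≤ 2 / (1 - |ω|) ^ 2 * c⁻¹ := by
  have hδ : 0 < 1 - |ω| := by linarith
  have hnum : |1 + ω * c| ≤ 2 * c := by
    rw [abs_le]; constructor <;> nlinarith [neg_abs_le ω, le_abs_self ω]
  have hden : (1 - |ω|) * c ≤ ω + c := by
    nlinarith [neg_abs_le ω, mul_le_mul_of_nonneg_left hc (abs_nonneg ω)]
  have hpos : 0 < ω + c := lt_of_lt_of_le (by positivity) hden
  rw [abs_div, abs_of_pos (pow_pos hpos 2), div_le_iff₀ (pow_pos hpos 2)]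
  calc |1 + ω * c| ≤ 2 * c := hnum
    _ = 2 / (1 - |ω|) ^ 2 * c⁻¹ * ((1 - |ω|) * c) ^ 2 := by field_simp
    _ ≤ 2 / (1 - |ω|) ^ 2 * c⁻¹ * (ω + c) ^ 2 := by gcongr

lemma inv_cosh_le_two_mul_exp_neg (x : ℝ) : (cosh x)⁻¹ ≤ 2 * exp (-x) := by
  rw [inv_le_iff_one_le_mul₀ (cosh_pos x), cosh_eq]
  have hx : exp x * exp (-x) = 1 := by rw [← exp_add, add_neg_cancel, exp_zero]
  nlinarith [exp_pos (-x)]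

lemma integrable_one_add_mul_cosh_div_sq (hω : |ω| < 1) :
    Integrable fun x ↦ (1 + ω * cosh x) / (ω + cosh x) ^ 2 := by
  have hω₁ : -1 < ω := (abs_lt.mp hω).1
  have hcont : Continuous fun x ↦ (1 + ω * cosh x) / (ω + cosh x) ^ 2 := by
    fun_prop (disch := exact fun x ↦ pow_ne_zero 2 (add_cosh_pos hω₁ x).ne')
  have hO : (fun x ↦ (1 + ω * cosh x) / (ω + cosh x) ^ 2) =O[atTop] fun x ↦ exp (-x) := by
    refine IsBigO.of_bound (2 / (1 - |ω|) ^ 2 * 2) (Eventually.of_forall fun x ↦ ?_)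
    rw [norm_eq_abs, norm_eq_abs, abs_of_pos (exp_pos _), mul_assoc]
    refine (abs_one_add_mul_div_add_sq_le hω (one_le_cosh x)).trans ?_
    gcongr
    exact inv_cosh_le_two_mul_exp_neg x
  have hexp : IntegrableAtFilter (fun x ↦ exp (-x)) atTop volume :=
    ⟨Ioi 0, Ioi_mem_atTop 0, by simpa using exp_neg_integrableOn_Ioi 0 one_pos⟩
  refine hcont.locallyIntegrable.integrable_of_isBigO_atTop_of_norm_isNegInvariant
    (Eventually.of_forall fun x ↦ ?_) hO hexp
  simp

lemma integral_one_add_mul_cosh_div_sq (hω : |ω| < 1) :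
    ∫ x, (1 + ω * cosh x) / (ω + cosh x) ^ 2 = 2 := by
  rw [integral_of_hasDerivAt_of_tendsto (hasDerivAt_sinh_div_add_cosh (abs_lt.mp hω).1)
    (integrable_one_add_mul_cosh_div_sq hω) tendsto_sinh_div_add_cosh_atBot
    tendsto_sinh_div_add_cosh_atTop]
  norm_num

end

theorem stmt7 (ω : ℝ) (hω₁ : -1 < ω) (hω₂ : ω < 1) :
    (∫ z : ℝ, (1 + ω * Real.cosh (2 * z)) / (ω + Real.cosh (2 * z)) ^ 2) = 1 := by
  rw [Measure.integral_comp_mul_left (fun x ↦ (1 + ω * cosh x) / (ω + cosh x) ^ 2) 2,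
    integral_one_add_mul_cosh_div_sq (abs_lt.mpr ⟨hω₁, hω₂⟩)]
  norm_num
end

section
/- For every ω ∈ (-1,1), the function ψ_c(z) = sinh(2z)/(ω + cosh(2z)) satisfies −ψ_c''(z) + [ 1 − 8(1−ω²)/(ω + cosh(2z))² − 4ω/(ω + cosh(2z)) ] ψ_c(z) = ψ_c(z) for all z ∈ ℝ; i.e. ψ_c is a bounded solution at the end-point λ = 1 of the continuous spectrum of the operator −d²/dz² + 1 − 8(1−ω²)/(ω+cosh 2z)² − 4ω/(ω+cosh 2z). -/
/-!
With `D = ω + cosh 2z`, the identity `cosh² - sinh² = 1` collapses the quotient rule to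
`ψ_c' = 2 (ω cosh 2z + 1) / D²`, and differentiating once more gives
`ψ_c'' = 4 sinh 2z (ω² - ω cosh 2z - 2) / D³`. Multiplying the potential term
`(8 (1 - ω²) / D² + 4 ω / D) ψ_c` out over `D³` gives the same numerator with the opposite sign.
-/

open Real

lemma add_cosh_two_mul_pos {ω : ℝ} (hω : -1 < ω) (z : ℝ) : 0 < ω + cosh (2 * z) := by
  linarith [one_le_cosh (2 * z)]

lemma hasDerivAt_sinh_two_mul (z : ℝ) :
    HasDerivAt (fun z => sinh (2 * z)) (2 * cosh (2 * z)) z := by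
  simpa [mul_comm] using ((hasDerivAt_id z).const_mul 2).sinh

lemma hasDerivAt_cosh_two_mul (z : ℝ) :
    HasDerivAt (fun z => cosh (2 * z)) (2 * sinh (2 * z)) z := by
  simpa [mul_comm] using ((hasDerivAt_id z).const_mul 2).cosh

lemma hasDerivAt_sinh_two_mul_div {ω z : ℝ} (h : ω + cosh (2 * z) ≠ 0) :
    HasDerivAt (fun z => sinh (2 * z) / (ω + cosh (2 * z)))
      (2 * (ω * cosh (2 * z) + 1) / (ω + cosh (2 * z)) ^ 2) z := by
  refine ((hasDerivAt_sinh_two_mul z).fun_div ((hasDerivAt_cosh_two_mul z).const_add ω)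
    h).congr_deriv ?_
  field_simp
  linear_combination cosh_sq_sub_sinh_sq (2 * z)

lemma hasDerivAt_deriv_sinh_two_mul_div {ω z : ℝ} (h : ω + cosh (2 * z) ≠ 0) :
    HasDerivAt (fun z => 2 * (ω * cosh (2 * z) + 1) / (ω + cosh (2 * z)) ^ 2)
      (4 * sinh (2 * z) * (ω ^ 2 - ω * cosh (2 * z) - 2) / (ω + cosh (2 * z)) ^ 3) z := by
  have hc := hasDerivAt_cosh_two_mul z
  refine ((((hc.const_mul ω).add_const 1).const_mul 2).fun_div ((hc.const_add ω).fun_pow 2)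
    (pow_ne_zero 2 h)).congr_deriv ?_
  field_simp
  ring

theorem stmt10_general (ω : ℝ) (hω₁ : -1 < ω) (z : ℝ) :
    -deriv (deriv (fun z : ℝ => Real.sinh (2 * z) / (ω + Real.cosh (2 * z)))) z
        + (1 - 8 * (1 - ω ^ 2) / (ω + Real.cosh (2 * z)) ^ 2
            - 4 * ω / (ω + Real.cosh (2 * z))) *
          (Real.sinh (2 * z) / (ω + Real.cosh (2 * z)))
      = Real.sinh (2 * z) / (ω + Real.cosh (2 * z)) := by
  have hD : ∀ x, ω + cosh (2 * x) ≠ 0 := fun x => (add_cosh_two_mul_pos hω₁ x).ne'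
  have hψ' : deriv (fun z => sinh (2 * z) / (ω + cosh (2 * z)))
      = fun z => 2 * (ω * cosh (2 * z) + 1) / (ω + cosh (2 * z)) ^ 2 :=
    funext fun x => (hasDerivAt_sinh_two_mul_div (hD x)).deriv
  rw [hψ', (hasDerivAt_deriv_sinh_two_mul_div (hD z)).deriv]
  field_simp [hD z]
  ring

theorem stmt10 (ω : ℝ) (hω₁ : -1 < ω) (hω₂ : ω < 1) (z : ℝ) :
    -deriv (deriv (fun z : ℝ => Real.sinh (2 * z) / (ω + Real.cosh (2 * z)))) z
        + (1 - 8 * (1 - ω ^ 2) / (ω + Real.cosh (2 * z)) ^ 2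
            - 4 * ω / (ω + Real.cosh (2 * z))) *
          (Real.sinh (2 * z) / (ω + Real.cosh (2 * z)))
      = Real.sinh (2 * z) / (ω + Real.cosh (2 * z)) :=
  stmt10_general ω hω₁ z
end

section
/- For every ω ∈ (-1,1) with ω ≠ 0, let f(x) = −(x/2) U_ω(x) − (i/(4ω)) U_ω(x) and g(x) = (x/2) conj(U_ω(x)) − (i/(4ω)) conj(U_ω(x)). Then for all x ∈ ℝ: −f''(x) − 2i|U_ω(x)|² f'(x) + (−2|U_ω(x)|⁴ − U_ω(x)² + conj(U_ω(x))² − 2ω|U_ω(x)|² + 1 − ω²) f(x) + 2ω U_ω(x)² g(x) = U_ω'(x); i.e. L₋ applied to the vector (−x/2)(U_ω, −conj(U_ω)) + (1/(4iω))(U_ω, conj(U_ω)) equals (U_ω', −conj(U_ω')). -/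
open Complex

/-!
Writing `U_ω = ab / D` with `a = √(1 + ω)`, `b = √(1 - ω)` and
`D = a cosh(abx) + i b sinh(abx)`, the profile solves the first-order system
`U' = -i (ω U - Ū + 2 |U|² U)` and satisfies the first integral `U² + Ū² = 2ω|U|² + 2|U|⁴`.
These two facts give `ℓ₋ U = 2ω U² Ū`, i.e. `L₋ (U, -Ū) = 0`. Since `ℓ₋` is a second-order
operator, multiplying by an affine function `p` only adds the commutator term
`-2p' (U' + i|U|²U)`. For `f = pU` with `p = -x/2 - i/(4ω)` and `g = qŪ` with
`q = x/2 - i/(4ω)`, the terms `p ℓ₋ U + 2ω U² g = 2ω(p + q) U² Ū = -i|U|²U` cancel the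
commutator's `i|U|²U`, leaving `U'`.
-/

open ComplexConjugate

noncomputable section

/-- The operator `ℓ₋` with the potential built from `u` (the paper's `U_ω`), applied to `f`. -/
def ellMinus (ω : ℝ) (u f : ℝ → ℂ) (x : ℝ) : ℂ :=
  -deriv (deriv f) x - 2 * I * ((‖u x‖ : ℝ) : ℂ) ^ 2 * deriv f x
    + (-2 * ((‖u x‖ : ℝ) : ℂ) ^ 4 - (u x) ^ 2 + (conj (u x)) ^ 2
        - 2 * (ω : ℂ) * ((‖u x‖ : ℝ) : ℂ) ^ 2 + 1 - (ω : ℂ) ^ 2) * f x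

lemma ellMinus_affine_mul (ω : ℝ) (u h : ℝ → ℂ) (α β : ℂ) {x : ℝ} (hh : Differentiable ℝ h)
    (hh' : DifferentiableAt ℝ (deriv h) x) :
    ellMinus ω u (fun y ↦ (α * y + β) * h y) x
      = (α * x + β) * ellMinus ω u h x
        - 2 * α * (deriv h x + I * ((‖u x‖ : ℝ) : ℂ) ^ 2 * h x) := by
  have hp (y : ℝ) : HasDerivAt (fun y : ℝ ↦ α * y + β) α y := by
    simpa using ((hasDerivAt_id y).ofReal_comp.const_mul α).add_const β
  have hd : deriv (fun y ↦ (α * y + β) * h y) = fun y ↦ α * h y + (α * y + β) * deriv h y :=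
    funext fun y ↦ ((hp y).mul (hh y).hasDerivAt).deriv
  have hdd : deriv (fun y ↦ α * h y + (α * y + β) * deriv h y) x
      = α * deriv h x + (α * deriv h x + (α * x + β) * deriv (deriv h) x) :=
    (((hh x).hasDerivAt.const_mul α).add ((hp x).mul hh'.hasDerivAt)).deriv
  rw [ellMinus, ellMinus, hd, hdd]
  ring

def solitonRHS (ω : ℝ) (z : ℂ) : ℂ := -I * (ω * z - conj z + 2 * z ^ 2 * conj z)

lemma conj_solitonRHS (ω : ℝ) (z : ℂ) :
    conj (solitonRHS ω z) = I * (ω * conj z - z + 2 * z * conj z ^ 2) := by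
  simp only [solitonRHS, map_mul, map_neg, map_sub, map_add, map_pow, map_ofNat, conj_I,
    conj_ofReal, conj_conj]
  ring

section SolitonODE

variable {ω : ℝ} {u : ℝ → ℂ}

lemma hasDerivAt_deriv_of_solitonRHS (hu : ∀ x, HasDerivAt u (solitonRHS ω (u x)) x) (x : ℝ) :
    HasDerivAt (deriv u)
      (-I * (ω * solitonRHS ω (u x) - conj (solitonRHS ω (u x))
        + 2 * (2 * u x * conj (u x) * solitonRHS ω (u x)
          + u x ^ 2 * conj (solitonRHS ω (u x))))) x := by
  have hd : deriv u = fun y ↦ solitonRHS ω (u y) := funext fun y ↦ (hu y).deriv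
  have hv : HasDerivAt (fun y ↦ conj (u y)) (conj (solitonRHS ω (u x))) x := (hu x).star
  rw [hd]
  have h := ((((hu x).const_mul (ω : ℂ)).sub hv).add
    ((((hu x).pow 2).const_mul 2).mul hv)).const_mul (-I)
  exact h.congr_deriv (by norm_num; ring)

/-- The first component of `L₋ (u, -ū) = 0`, the kernel vector coming from the phase symmetry. -/
lemma ellMinus_self (hu : ∀ x, HasDerivAt u (solitonRHS ω (u x)) x) {x : ℝ}
    (hC : u x ^ 2 + conj (u x) ^ 2
      = 2 * ω * (u x * conj (u x)) + 2 * (u x * conj (u x)) ^ 2) :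
    ellMinus ω u u x = 2 * ω * u x ^ 2 * conj (u x) := by
  have hn : ((‖u x‖ : ℝ) : ℂ) ^ 2 = u x * conj (u x) := (mul_conj' _).symm
  have hn4 : ((‖u x‖ : ℝ) : ℂ) ^ 4 = (u x * conj (u x)) ^ 2 := by rw [← hn]; ring
  rw [ellMinus, (hasDerivAt_deriv_of_solitonRHS hu x).deriv, (hu x).deriv, hn4, hn,
    conj_solitonRHS]
  set P := ω * u x - conj (u x) + 2 * u x ^ 2 * conj (u x)
  set Q := ω * conj (u x) - u x + 2 * u x * conj (u x) ^ 2
  simp only [solitonRHS]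
  -- once `I ^ 2 = -1` is used, the left side is `u (u² + ū² - 2 |u|⁴)`
  linear_combination u x * hC
    + (-(ω * P) - Q - 2 * (u x * conj (u x)) * P + 2 * u x ^ 2 * Q) * I_sq

lemma ellMinus_add_eq_deriv (hω₀ : ω ≠ 0) (hu : ∀ x, HasDerivAt u (solitonRHS ω (u x)) x)
    {x : ℝ} (hC : u x ^ 2 + conj (u x) ^ 2
      = 2 * ω * (u x * conj (u x)) + 2 * (u x * conj (u x)) ^ 2)
    {f g : ℝ → ℂ} (hf : ∀ y : ℝ, f y = -((y : ℂ) / 2) * u y - (I / (4 * (ω : ℂ))) * u y)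
    (hg : g x = ((x : ℂ) / 2) * conj (u x) - (I / (4 * (ω : ℂ))) * conj (u x)) :
    ellMinus ω u f x + 2 * ω * u x ^ 2 * g x = deriv u x := by
  have hω : (ω : ℂ) ≠ 0 := ofReal_ne_zero.2 hω₀
  have hf' : f = fun y ↦ (-(1 / 2) * y + -(I / (4 * ω))) * u y := funext fun y ↦ by
    rw [hf]; ring
  rw [hf', ellMinus_affine_mul _ _ _ _ _ (fun y ↦ (hu y).differentiableAt)
    (hasDerivAt_deriv_of_solitonRHS hu x).differentiableAt, ellMinus_self hu hC, hg,
    ← mul_conj']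
  field_simp
  ring

end SolitonODE

lemma soliton_ode_numerator (a b c s ω : ℂ) (ha : a ^ 2 = 1 + ω) (hb : b ^ 2 = 1 - ω)
    (hcs : c ^ 2 - s ^ 2 = 1) :
    a * b * ((a * s + I * (b * c)) * (a * c - I * (b * s)))
      = I * (ω * ((a * c + I * (b * s)) * (a * c - I * (b * s))) - (a * c + I * (b * s)) ^ 2
        + 2 * (a * b) ^ 2) := by
  have h1 : (a * s + I * (b * c)) * (a * c - I * (b * s)) = 2 * s * c + I * (a * b) := by
    linear_combination s * c * ha + s * c * hb + I * a * b * hcs - b ^ 2 * s * c * I_sq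
  have h2 : ω * ((a * c + I * (b * s)) * (a * c - I * (b * s))) - (a * c + I * (b * s)) ^ 2
      + 2 * (a * b) ^ 2 = (a * b) ^ 2 - 2 * I * (a * b) * c * s := by
    linear_combination -(1 + ω) * b ^ 2 * s ^ 2 * I_sq + a ^ 2 * c ^ 2 * hb - b ^ 2 * s ^ 2 * ha
      - a ^ 2 * b ^ 2 * hcs
  rw [h1, h2]
  linear_combination 2 * a * b * c * s * I_sq

lemma soliton_first_integral_numerator (a b c s ω : ℂ) (ha : a ^ 2 = 1 + ω)
    (hb : b ^ 2 = 1 - ω) (hcs : c ^ 2 - s ^ 2 = 1) :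
    (a * c + I * (b * s)) ^ 2 + (a * c - I * (b * s)) ^ 2
      = 2 * ω * ((a * c + I * (b * s)) * (a * c - I * (b * s))) + 2 * (a * b) ^ 2 := by
  linear_combination 2 * (1 + ω) * b ^ 2 * s ^ 2 * I_sq - 2 * a ^ 2 * c ^ 2 * hb
    + 2 * b ^ 2 * s ^ 2 * ha + 2 * a ^ 2 * b ^ 2 * hcs

def solitonDen (a b x : ℝ) : ℂ := a * Real.cosh (a * b * x) + I * (b * Real.sinh (a * b * x))

section SolitonDen

variable {a b : ℝ}

lemma conj_solitonDen (x : ℝ) :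
    conj (solitonDen a b x) = a * Real.cosh (a * b * x) - I * (b * Real.sinh (a * b * x)) := by
  simp only [solitonDen, map_add, map_mul, conj_ofReal, conj_I]
  ring

lemma solitonDen_ne_zero (ha : a ≠ 0) (x : ℝ) : solitonDen a b x ≠ 0 := by
  intro h
  have hre := congrArg re h
  simp only [solitonDen, add_re, mul_re, mul_im, I_re, I_im, ofReal_re, ofReal_im, zero_re] at hre
  have : a * Real.cosh (a * b * x) ≠ 0 := mul_ne_zero ha (Real.cosh_pos _).ne'
  exact this (by linarith)

lemma hasDerivAt_solitonDen (x : ℝ) :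
    HasDerivAt (solitonDen a b)
      (a * b * (a * Real.sinh (a * b * x) + I * (b * Real.cosh (a * b * x)))) x := by
  have hlin : HasDerivAt (fun y : ℝ ↦ a * b * y) (a * b) x := by
    simpa using (hasDerivAt_id x).const_mul (a * b)
  have hc := ((Real.hasDerivAt_cosh _).comp x hlin).ofReal_comp.const_mul (a : ℂ)
  have hs := (((Real.hasDerivAt_sinh _).comp x hlin).ofReal_comp.const_mul (b : ℂ)).const_mul I
  exact (hc.add hs).congr_deriv (by push_cast; ring)

variable {ω : ℝ} (ha : a ≠ 0) (ha2 : (a : ℂ) ^ 2 = 1 + ω) (hb2 : (b : ℂ) ^ 2 = 1 - ω)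
include ha ha2 hb2

lemma hasDerivAt_div_solitonDen (x : ℝ) :
    HasDerivAt (fun y ↦ (a * b : ℂ) / solitonDen a b y)
      (solitonRHS ω ((a * b : ℂ) / solitonDen a b x)) x := by
  have hcs : (Real.cosh (a * b * x) : ℂ) ^ 2 - (Real.sinh (a * b * x) : ℂ) ^ 2 = 1 := by
    exact_mod_cast Real.cosh_sq_sub_sinh_sq _
  have hD : solitonDen a b x ≠ 0 := solitonDen_ne_zero ha x
  have hE : conj (solitonDen a b x) ≠ 0 := (map_ne_zero _).2 hD
  refine ((hasDerivAt_const x _).div (hasDerivAt_solitonDen x) hD).congr_deriv ?_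
  rw [solitonRHS, map_div₀, map_mul, conj_ofReal, conj_ofReal]
  field_simp
  rw [conj_solitonDen, solitonDen]
  linear_combination -(a * b : ℂ) * soliton_ode_numerator _ _ _ _ _ ha2 hb2 hcs

lemma div_solitonDen_first_integral {x : ℝ} {u : ℂ} (hu : u = (a * b : ℂ) / solitonDen a b x) :
    u ^ 2 + conj u ^ 2 = 2 * ω * (u * conj u) + 2 * (u * conj u) ^ 2 := by
  have hcs : (Real.cosh (a * b * x) : ℂ) ^ 2 - (Real.sinh (a * b * x) : ℂ) ^ 2 = 1 := by
    exact_mod_cast Real.cosh_sq_sub_sinh_sq _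
  have hD : solitonDen a b x ≠ 0 := solitonDen_ne_zero ha x
  have hE : conj (solitonDen a b x) ≠ 0 := (map_ne_zero _).2 hD
  rw [hu, map_div₀, map_mul, conj_ofReal, conj_ofReal]
  field_simp
  rw [conj_solitonDen, solitonDen]
  linear_combination (a * b : ℂ) ^ 2 * soliton_first_integral_numerator _ _ _ _ _ ha2 hb2 hcs

end SolitonDen

lemma solitonU_eq_div_s14 {ω : ℝ} (hω : -1 ≤ ω) :
    solitonU ω = fun x ↦
      (√(1 + ω) * √(1 - ω) : ℂ) / solitonDen √(1 + ω) √(1 - ω) x := by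
  have hk : √(1 - ω ^ 2) = √(1 + ω) * √(1 - ω) := by
    rw [← Real.sqrt_mul (by linarith)]
    ring_nf
  funext x
  rw [solitonU, solitonDen, hk]
  push_cast
  ring

end

theorem stmt14 (ω : ℝ) (hω₁ : -1 < ω) (hω₂ : ω < 1) (hω₀ : ω ≠ 0)
    (f g : ℝ → ℂ)
    (hf : ∀ x : ℝ, f x = -((x : ℂ) / 2) * solitonU ω x
        - (Complex.I / (4 * (ω : ℂ))) * solitonU ω x)
    (hg : ∀ x : ℝ, g x = ((x : ℂ) / 2) * (starRingEnd ℂ) (solitonU ω x)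
        - (Complex.I / (4 * (ω : ℂ))) * (starRingEnd ℂ) (solitonU ω x)) :
    ∀ x : ℝ,
      -deriv (deriv f) x
          - 2 * Complex.I * ((‖solitonU ω x‖ : ℝ) : ℂ) ^ 2 * deriv f x
          + (-2 * ((‖solitonU ω x‖ : ℝ) : ℂ) ^ 4 - (solitonU ω x) ^ 2
              + ((starRingEnd ℂ) (solitonU ω x)) ^ 2
              - 2 * (ω : ℂ) * ((‖solitonU ω x‖ : ℝ) : ℂ) ^ 2
              + 1 - (ω : ℂ) ^ 2) * f x
          + 2 * (ω : ℂ) * (solitonU ω x) ^ 2 * g x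
        = deriv (solitonU ω) x := by
  intro x
  have ha : √(1 + ω) ≠ 0 := (Real.sqrt_pos.2 (by linarith)).ne'
  have ha2 : ((√(1 + ω) : ℝ) : ℂ) ^ 2 = 1 + ω := by
    exact_mod_cast Real.sq_sqrt (by linarith : 0 ≤ 1 + ω)
  have hb2 : ((√(1 - ω) : ℝ) : ℂ) ^ 2 = 1 - ω := by
    exact_mod_cast Real.sq_sqrt (by linarith : 0 ≤ 1 - ω)
  have hU := solitonU_eq_div_s14 hω₁.le
  have hu (y : ℝ) : HasDerivAt (solitonU ω) (solitonRHS ω (solitonU ω y)) y := by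
    rw [hU]
    exact hasDerivAt_div_solitonDen ha ha2 hb2 y
  exact ellMinus_add_eq_deriv hω₀ hu
    (div_solitonDen_first_integral ha ha2 hb2 (congrFun hU x)) hf (hg x)
end

section
/- For every ω ∈ (-1,1) and every smooth compactly supported real-valued function ψ on ℝ, the quadratic form of the spectral problem (26) is nonnegative: ∫_ℝ [ ψ'(z)² + ( 1 − 3(1−ω²)/(ω + cosh 2z)² − 4ω/(ω + cosh 2z) ) ψ(z)² ] dz ≥ 0. (Equivalently, the lowest eigenvalue of the operator −d²/dz² + 1 − 3(1−ω²)/(ω+cosh 2z)² − 4ω/(ω+cosh 2z) is zero.) -/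
open MeasureTheory

private lemma stmt15_aux (ω c s p d : ℝ) (h : c ^ 2 = s ^ 2 + 1) (hne : ω + c ≠ 0) :
    d ^ 2 + (1 - 3 * (1 - ω ^ 2) / (ω + c) ^ 2 - 4 * ω / (ω + c)) * p ^ 2 =
    (d - (-s / (ω + c)) * p) * (d - (-s / (ω + c)) * p)
      + ((-(c * 2) * (ω + c) - (-s) * (s * 2)) / (ω + c) ^ 2 * p ^ 2
          + (-s / (ω + c)) * ((2 : ℕ) * p ^ 1 * d)) := by
  field_simp
  linear_combination (3 * p ^ 2) * h

theorem stmt15 (ω : ℝ) (hω₁ : -1 < ω) (hω₂ : ω < 1)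
    (ψ : ℝ → ℝ) (hψ : ContDiff ℝ (⊤ : ℕ∞) ψ) (hsupp : HasCompactSupport ψ) :
    0 ≤ ∫ z : ℝ, ((deriv ψ z) ^ 2
        + (1 - 3 * (1 - ω ^ 2) / (ω + Real.cosh (2 * z)) ^ 2
            - 4 * ω / (ω + Real.cosh (2 * z))) * (ψ z) ^ 2) := by
  have hF : ∀ z : ℝ, 0 < ω + Real.cosh (2 * z) := by
    intro z
    have h1 := Real.one_le_cosh (2 * z)
    linarith
  have hFne : ∀ z : ℝ, ω + Real.cosh (2 * z) ≠ 0 := fun z => (hF z).ne'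
  set g : ℝ → ℝ := fun z => -Real.sinh (2 * z) / (ω + Real.cosh (2 * z)) with hg_def
  set G : ℝ → ℝ := fun z => g z * ψ z ^ 2 with hG_def
  set D : ℝ → ℝ := fun z => deriv ψ z - g z * ψ z with hD_def
  have hψdiff : Differentiable ℝ ψ := hψ.differentiable (by simp)
  -- smoothness facts
  have hcont2z : ContDiff ℝ (⊤ : ℕ∞) (fun z : ℝ => 2 * z) := contDiff_const.mul contDiff_id
  have hFc : ContDiff ℝ (⊤ : ℕ∞) (fun z : ℝ => ω + Real.cosh (2 * z)) :=
    contDiff_const.add (Real.contDiff_cosh.comp hcont2z)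
  have hgc : ContDiff ℝ (⊤ : ℕ∞) g :=
    ((Real.contDiff_sinh.comp hcont2z).neg).div hFc hFne
  have hGc : ContDiff ℝ (⊤ : ℕ∞) G := hgc.mul (hψ.pow 2)
  have hψ' : Continuous (deriv ψ) := hψ.continuous_deriv (by simp)
  have hDc : Continuous D := hψ'.sub (hgc.continuous.mul hψ.continuous)
  -- compact support facts
  have hDsupp : HasCompactSupport D := by
    have h1 : HasCompactSupport (fun z => g z * ψ z) := HasCompactSupport.mul_left hsupp
    exact HasCompactSupport.comp₂_left hsupp.deriv h1 (by simp)
  have hGsupp : HasCompactSupport G := by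
    have h2 : HasCompactSupport (fun z => ψ z ^ 2) :=
      hsupp.comp_left (g := fun x : ℝ => x ^ 2) (by simp)
    exact HasCompactSupport.mul_left h2
  -- derivative of G
  have hGderiv : ∀ z : ℝ,
      HasDerivAt G
        (((-(Real.cosh (2 * z) * 2)) * (ω + Real.cosh (2 * z))
            - (-Real.sinh (2 * z)) * (Real.sinh (2 * z) * 2)) /
              (ω + Real.cosh (2 * z)) ^ 2 * ψ z ^ 2
          + g z * ((2 : ℕ) * ψ z ^ 1 * deriv ψ z)) z := by
    intro z
    have h2z : HasDerivAt (fun z : ℝ => 2 * z) 2 z := by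
      simpa using (hasDerivAt_id z).const_mul 2
    have hnum : HasDerivAt (fun z : ℝ => -Real.sinh (2 * z))
        (-(Real.cosh (2 * z) * 2)) z := (h2z.sinh).neg
    have hden : HasDerivAt (fun z : ℝ => ω + Real.cosh (2 * z))
        (Real.sinh (2 * z) * 2) z := (h2z.cosh).const_add ω
    have hg' := hnum.div hden (hFne z)
    exact hg'.mul ((hψdiff z).hasDerivAt.pow 2)
  -- the pointwise identity
  have hkey : ∀ z : ℝ,
      (deriv ψ z) ^ 2
        + (1 - 3 * (1 - ω ^ 2) / (ω + Real.cosh (2 * z)) ^ 2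
            - 4 * ω / (ω + Real.cosh (2 * z))) * (ψ z) ^ 2
      = D z * D z + deriv G z := by
    intro z
    rw [(hGderiv z).deriv]
    exact stmt15_aux ω (Real.cosh (2 * z)) (Real.sinh (2 * z)) (ψ z) (deriv ψ z)
      (Real.cosh_sq _) (hFne z)
  -- integrability
  have hIntD : Integrable (fun z => D z * D z) :=
    (hDc.mul hDc).integrable_of_hasCompactSupport (HasCompactSupport.mul_right hDsupp)
  have hIntG : Integrable (deriv G) :=
    (hGc.continuous_deriv (by simp)).integrable_of_hasCompactSupport hGsupp.deriv
  -- integral of deriv G vanishes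
  have hGzero : ∫ z : ℝ, deriv G z = 0 := by
    have hGc1 : ContDiff ℝ 1 G := hGc.of_le (by simp)
    have h1 := hGsupp.integral_Iic_deriv_eq hGc1 0
    have h2 := hGsupp.integral_Ioi_deriv_eq hGc1 0
    have h3 := intervalIntegral.integral_Iic_add_Ioi (b := (0:ℝ)) (f := deriv G)
      hIntG.integrableOn hIntG.integrableOn
    rw [← h3, h1, h2]
    ring
  calc (0:ℝ) ≤ ∫ z : ℝ, D z * D z :=
        integral_nonneg fun z => mul_self_nonneg _
    _ = (∫ z : ℝ, D z * D z) + ∫ z : ℝ, deriv G z := by rw [hGzero, add_zero]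
    _ = ∫ z : ℝ, (D z * D z + deriv G z) := (integral_add hIntD hIntG).symm
    _ = _ := by
        apply integral_congr_ae
        filter_upwards with z
        exact (hkey z).symm
end
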